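/- In the overalgebra 𝐀 of the second type, suppose η ∈ Con 𝐀 satisfies η∩(B×B) = θ ∈ Con 𝐁, and suppose (x,y) ∈ η \ θ* for some x ∈ B_i and y ∈ B_j. Then i and j are distinct multiples of K belonging to the same block of the partition 𝒯, and θ ≥ β. -/
import Mathlib


namespace Overalg

variable {A : Type*}

/-- `θ` is an equivalence relation on the whole type `A`, viewed as a set of pairs. -/
def IsEquivRel (θ : Set (A × A)) : Prop :=
  (∀ x : A, (x, x) ∈ θ) ∧ (∀ x y : A, (x, y) ∈ θ → (y, x) ∈ θ) ∧
    (∀ x y z : A, (x, y) ∈ θ → (y, z) ∈ θ → (x, z) ∈ θ)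

/-- `θ` is an equivalence relation on the subset `B` of `A`, viewed as a set of pairs. -/
def IsEquivOn (B : Set A) (θ : Set (A × A)) : Prop :=
  θ ⊆ B ×ˢ B ∧ (∀ x ∈ B, (x, x) ∈ θ) ∧ (∀ x y : A, (x, y) ∈ θ → (y, x) ∈ θ) ∧
    (∀ x y z : A, (x, y) ∈ θ → (y, z) ∈ θ → (x, z) ∈ θ)

/-- The clone of unary polynomials of the unary algebra `⟨A, F⟩`: the smallest set of
maps `A → A` containing `F`, the identity and all constants, closed under composition. -/
inductive Pol1 (F : Set (A → A)) : (A → A) → Prop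
  | base : ∀ f ∈ F, Pol1 F f
  | id : Pol1 F _root_.id
  | const : ∀ a : A, Pol1 F (fun _ => a)
  | comp : ∀ f g : A → A, Pol1 F f → Pol1 F g → Pol1 F (f ∘ g)

/-- A congruence of the unary algebra `⟨A, F⟩`. -/
def IsCon (F : Set (A → A)) (θ : Set (A × A)) : Prop :=
  IsEquivRel θ ∧ ∀ f ∈ F, ∀ p ∈ θ, (f p.1, f p.2) ∈ θ

end Overalg

namespace Overalg

/-- The data of an *overalgebra of the second type*, built over a finite base algebra
`𝐁 = ⟨B 0, F⟩` and the congruence `β = Cg^𝐁((a 1, b 1), …, (a (K-1), b (K-1)))`.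
The universe is `A = B 0 ∪ B 1 ∪ ⋯ ∪ B (u*K)`, a chain of copies of `B 0` glued at
tie-points as in the paper; `π j : B 0 → B j` are bijections with inverses `σ j`;
`T 1 | ⋯ | T N` is a partition of the multiples of `K` in `{0, …, u*K}`, and the maps
`e j` are the retractions described in the construction. -/
structure OvII (A : Type*) where
  K : ℕ
  u : ℕ
  N : ℕ
  B : ℕ → Set A
  F : Set (A → A)
  a : ℕ → A
  b : ℕ → A
  π : ℕ → A → A
  σ : ℕ → A → A
  T : ℕ → Set ℕ
  e : ℕ → A → A
  β : Set (A × A)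
  hfin : Finite A
  hK : 2 ≤ K
  hu : 1 ≤ u
  /-- `A = B 0 ∪ ⋯ ∪ B (u*K)` -/
  hA : ∀ x : A, ∃ j ≤ u * K, x ∈ B j
  /-- the base operations map `B 0` into itself -/
  hF : ∀ f ∈ F, Set.MapsTo f (B 0) (B 0)
  /-- the generating pairs lie in `B 0` -/
  hab : ∀ i, 1 ≤ i → i ≤ K - 1 → a i ∈ B 0 ∧ b i ∈ B 0
  /-- `π 0` is the identity -/
  hπ0 : ∀ x : A, π 0 x = x
  /-- `π j` is a bijection of `B 0` onto `B j` -/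
  hπ : ∀ j ≤ u * K, Set.BijOn (π j) (B 0) (B j)
  /-- `σ j` inverts `π j` on `B 0` -/
  hσ : ∀ j ≤ u * K, ∀ c ∈ B 0, σ j (π j c) = c
  /-- `β` is the smallest congruence of `𝐁` containing the pairs `(a i, b i)` -/
  hβ : IsLeast {γ : Set (A × A) |
      (IsEquivOn (B 0) γ ∧ ∀ f ∈ F, ∀ p ∈ γ, (f p.1, f p.2) ∈ γ) ∧
      ∀ i, 1 ≤ i → i ≤ K - 1 → (a i, b i) ∈ γ} β
  /-- adjacent intersections at a multiple of `K`:
  `B ℓ ∩ B (ℓ+1) = {a₁^ℓ} = {a₁^{ℓ+1}}` -/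
  hadj0 : ∀ j < u * K, j % K = 0 →
    B j ∩ B (j + 1) = {π j (a 1)} ∧ π j (a 1) = π (j + 1) (a 1)
  /-- adjacent intersections in the middle of a segment:
  `B (ℓ+i) ∩ B (ℓ+i+1) = {b_i^{ℓ+i}} = {a_{i+1}^{ℓ+i+1}}` for `1 ≤ i ≤ K-2` -/
  hadjm : ∀ j < u * K, 1 ≤ j % K → j % K ≤ K - 2 →
    B j ∩ B (j + 1) = {π j (b (j % K))} ∧ π j (b (j % K)) = π (j + 1) (a (j % K + 1))
  /-- adjacent intersections at the end of a segment:
  `B (ℓ+K-1) ∩ B (ℓ+K) = {b_{K-1}^{ℓ+K-1}} = {a₁^{ℓ+K}}` -/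
  hadjl : ∀ j < u * K, j % K = K - 1 →
    B j ∩ B (j + 1) = {π j (b (K - 1))} ∧ π j (b (K - 1)) = π (j + 1) (a 1)
  /-- the triple meets: `B (ℓ-1) ∩ B (ℓ+1) = {a₁^ℓ}` for `ℓ` a positive multiple
  of `K` with `ℓ < u*K` -/
  htriple : ∀ j, 0 < j → j + 1 ≤ u * K → j % K = 0 → B (j - 1) ∩ B (j + 1) = {π j (a 1)}
  /-- all other intersections are empty -/
  hempty : ∀ i j, i ≤ u * K → j ≤ u * K → i + 2 ≤ j →
    ¬(j = i + 2 ∧ (i + 1) % K = 0) → B i ∩ B j = ∅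
  /-- each block `T n` consists of multiples of `K` that are at most `u*K` -/
  hT1 : ∀ n, 1 ≤ n → n ≤ N → T n ⊆ {j : ℕ | j ≤ u * K ∧ K ∣ j}
  /-- the blocks `T 1, …, T N` partition `{0, K, 2K, …, uK}` -/
  hT2 : ∀ j ≤ u * K, K ∣ j → ∃! n, 1 ≤ n ∧ n ≤ N ∧ j ∈ T n
  /-- for `ℓ` a multiple of `K`: `e ℓ` maps `B j` onto `B ℓ` via `S_{j,ℓ}` when `j` is
  in the same block of the partition as `ℓ` … -/
  heK1 : ∀ n, 1 ≤ n → n ≤ N → ∀ ℓ ∈ T n, ∀ j ∈ T n, ∀ c ∈ B 0, e ℓ (π j c) = π ℓ c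
  /-- … and sends everything else to the tie-point `a₁^ℓ` -/
  heK2 : ∀ n, 1 ≤ n → n ≤ N → ∀ ℓ ∈ T n, ∀ x : A, (∀ j ∈ T n, x ∉ B j) →
    e ℓ x = π ℓ (a 1)
  /-- for `j = ℓ + i` with `1 ≤ i < K`: `e j` is the identity on `B j` … -/
  heM1 : ∀ j ≤ u * K, j % K ≠ 0 → ∀ x ∈ B j, e j x = x
  /-- … maps everything to the left of `B j` to the left tie-point `a_i^j` … -/
  heM2 : ∀ j ≤ u * K, j % K ≠ 0 → ∀ j' < j, ∀ x ∈ B j', x ∉ B j →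
    e j x = π j (a (j % K))
  /-- … and everything to the right of `B j` to the right tie-point `b_i^j` -/
  heM3 : ∀ j ≤ u * K, j % K ≠ 0 → ∀ j', j < j' → j' ≤ u * K → ∀ x ∈ B j', x ∉ B j →
    e j x = π j (b (j % K))

namespace OvII

variable {A : Type*} (O : OvII A)

/-- `q i j = S i j ∘ e i`; here `q i 0 = σ i ∘ e i` and `q 0 j = π j ∘ e 0`. -/
def qi0 (i : ℕ) : A → A := fun x => O.σ i (O.e i x)

/-- `q 0 j = π j ∘ e 0`. -/
def q0j (j : ℕ) : A → A := fun x => O.π j (O.e 0 x)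

/-- The operations of the overalgebra:
`F_A = {f ∘ e 0 : f ∈ F} ∪ {q i 0 : 0 ≤ i ≤ uK} ∪ {q 0 j : 1 ≤ j ≤ uK}`. -/
def FA : Set (A → A) :=
  {g | ∃ f ∈ O.F, g = f ∘ O.e 0} ∪ {g | ∃ i ≤ O.u * O.K, g = O.qi0 i} ∪
    {g | ∃ j, 1 ≤ j ∧ j ≤ O.u * O.K ∧ g = O.q0j j}

/-- A congruence of the base algebra `𝐁 = ⟨B 0, F⟩`. -/
def ConB (θ : Set (A × A)) : Prop :=
  IsEquivOn (O.B 0) θ ∧ ∀ f ∈ O.F, ∀ p ∈ θ, (f p.1, f p.2) ∈ θ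

/-- A tie-point `t j` of `B j`: `a₁^j` when `K ∣ j`, and `a_i^j` when `j = ℓ + i`,
`1 ≤ i < K`. -/
def tie (j : ℕ) : A := O.π j (O.a (if j % O.K = 0 then 1 else j % O.K))

/-- `β^j = {(π j x, π j y) : (x, y) ∈ β}`, the copy of `β` on `B j`. -/
def bj (j : ℕ) : Set (A × A) := {p | ∃ q ∈ O.β, p = (O.π j q.1, O.π j q.2)}

/-- `t j / β^j`, the `β^j`-class of the tie-point of `B j`. -/
def tcls (j : ℕ) : Set A := {x | (O.tie j, x) ∈ O.bj j}

/-- `β⋆ = ⋃_{j=0}^{uK} β^j ∪ (⋃_{j=0}^{uK} t_j/β^j)²`. -/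
def bstar : Set (A × A) :=
  {p | ∃ j ≤ O.u * O.K, p ∈ O.bj j} ∪
    {p | (∃ j ≤ O.u * O.K, p.1 ∈ O.tcls j) ∧ (∃ j ≤ O.u * O.K, p.2 ∈ O.tcls j)}

/-- The `θ`-class of `c`. -/
def cls (_O : OvII A) (θ : Set (A × A)) (c : A) : Set A := {x | (c, x) ∈ θ}

/-- For `c ∈ B 0` with `β`-class `C_r = c/β`, this is `⋃_{ℓ ∈ T n} C_r^ℓ`. -/
def wing (n : ℕ) (c : A) : Set A := ⋃ ℓ ∈ O.T n, O.π ℓ '' O.cls O.β c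

/-- `β̃ = β⋆ ∪ ⋃_{r=1}^{m-1} ⋃_{n=1}^{N} (⋃_{ℓ ∈ 𝒯_n} C_r^ℓ)²`, where the classes of
`β` other than the class of `a 1` are parametrized by their elements `c`. -/
def btilde : Set (A × A) :=
  O.bstar ∪
    {p | ∃ n, 1 ≤ n ∧ n ≤ O.N ∧ ∃ c ∈ O.B 0, (c, O.a 1) ∉ O.β ∧
      p.1 ∈ O.wing n c ∧ p.2 ∈ O.wing n c}

end OvII

end Overalg

private lemma mod_succ_eq' {K k : ℕ} (h : k % K + 1 < K) : (k + 1) % K = k % K + 1 := by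
  have h1 : (1:ℕ) % K = 1 := Nat.mod_eq_of_lt (by omega)
  rw [Nat.add_mod, h1, Nat.mod_eq_of_lt h]

private lemma mod_succ_zero' {K k : ℕ} (hK : 0 < K) (h : k % K = K - 1) : (k + 1) % K = 0 := by
  rcases Nat.lt_or_ge 1 K with h1 | h1
  · have h2 : (1:ℕ) % K = 1 := Nat.mod_eq_of_lt h1
    rw [Nat.add_mod, h2, h, show K - 1 + 1 = K by omega, Nat.mod_self]
  · have : K = 1 := by omega
    subst this; simp [Nat.mod_one]

private lemma dvd_succ_le_one' {K k : ℕ} (h1 : K ∣ k) (h2 : K ∣ (k + 1)) : K ≤ 1 := by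
  have h3 := Nat.dvd_sub h2 h1
  rw [show k + 1 - k = 1 by omega] at h3
  exact Nat.le_of_dvd one_pos h3

private lemma add_le_of_dvd_lt' {K P Q : ℕ} (hP : K ∣ P) (hQ : K ∣ Q) (h : P < Q) : P + K ≤ Q := by
  obtain ⟨p, rfl⟩ := hP; obtain ⟨q, rfl⟩ := hQ
  have hpq : p < q := Nat.lt_of_mul_lt_mul_left h
  calc K * p + K = K * (p + 1) := by ring
  _ ≤ K * q := Nat.mul_le_mul_left K hpq

private lemma add_mod_dvd' {K P m : ℕ} (hP : K ∣ P) (h : m < K) : (P + m) % K = m := by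
  obtain ⟨p, rfl⟩ := hP
  rw [Nat.mul_add_mod, Nat.mod_eq_of_lt h]

private lemma pred_mod' {K Q : ℕ} (hK : 0 < K) (hQd : K ∣ Q) (hQ : 1 ≤ Q) : (Q - 1) % K = K - 1 := by
  obtain ⟨q, rfl⟩ := hQd
  have hq : 1 ≤ q := by
    rcases Nat.eq_zero_or_pos q with rfl | h; · simp at hQ
    · exact h
  obtain ⟨q', rfl⟩ : ∃ q', q = q' + 1 := ⟨q - 1, by omega⟩
  have he : K * (q' + 1) - 1 = K * q' + (K - 1) := by
    have : K * (q' + 1) = K * q' + K := by ring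
    omega
  rw [he, Nat.mul_add_mod, Nat.mod_eq_of_lt (by omega)]

namespace Overalg
namespace OvII

variable {A : Type*} (O : OvII A)

lemma a1B : O.a 1 ∈ O.B 0 := (O.hab 1 le_rfl (by have := O.hK; omega)).1

lemma efix {k : ℕ} (hk : k ≤ O.u * O.K) {w : A} (hw : w ∈ O.B k) : O.e k w = w := by
  by_cases h : k % O.K = 0
  · obtain ⟨n, ⟨hn1, hn2, hkn⟩, -⟩ := O.hT2 k hk (Nat.dvd_of_mod_eq_zero h)
    obtain ⟨c, hc, rfl⟩ := (O.hπ k hk).surjOn hw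
    exact O.heK1 n hn1 hn2 k hkn k hkn c hc
  · exact O.heM1 k hk h w hw

lemma eform {k : ℕ} (hk : k ≤ O.u * O.K) (w : A) : ∃ c ∈ O.B 0, O.e k w = O.π k c := by
  by_cases hmem : w ∈ O.B k
  · obtain ⟨c, hc, rfl⟩ := (O.hπ k hk).surjOn hmem
    exact ⟨c, hc, by rw [O.efix hk hmem]⟩
  · by_cases h : k % O.K = 0
    · obtain ⟨n, ⟨hn1, hn2, hkn⟩, -⟩ := O.hT2 k hk (Nat.dvd_of_mod_eq_zero h)
      by_cases hex : ∃ j ∈ O.T n, w ∈ O.B j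
      · obtain ⟨j, hjn, hwj⟩ := hex
        have hj : j ≤ O.u * O.K := (O.hT1 n hn1 hn2 hjn).1
        obtain ⟨c, hc, rfl⟩ := (O.hπ j hj).surjOn hwj
        exact ⟨c, hc, O.heK1 n hn1 hn2 k hkn j hjn c hc⟩
      · push_neg at hex
        exact ⟨O.a 1, O.a1B, O.heK2 n hn1 hn2 k hkn w hex⟩
    · obtain ⟨j, hj, hwj⟩ := O.hA w
      have hK0 : 0 < O.K := by have := O.hK; omega
      have hmlt : k % O.K < O.K := Nat.mod_lt _ hK0
      rcases lt_trichotomy j k with hlt | heq | hgt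
      · exact ⟨O.a (k % O.K), (O.hab _ (by omega) (by omega)).1,
          O.heM2 k hk h j hlt w hwj hmem⟩
      · exact absurd (heq ▸ hwj) hmem
      · exact ⟨O.b (k % O.K), (O.hab _ (by omega) (by omega)).2,
          O.heM3 k hk h j hgt hj w hwj hmem⟩

lemma two_apart {p q : ℕ} (hq : q ≤ O.u * O.K) (hpq : p + 2 ≤ q) {w : A}
    (hp : w ∈ O.B p) (hw : w ∈ O.B q) :
    q = p + 2 ∧ (p + 1) % O.K = 0 ∧ w = O.π (p + 1) (O.a 1) := by
  by_cases h : q = p + 2 ∧ (p + 1) % O.K = 0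
  · obtain ⟨h1, h2⟩ := h
    subst h1
    have ht := O.htriple (p + 1) (by omega) (by omega) h2
    have hm : w ∈ O.B (p + 1 - 1) ∩ O.B (p + 1 + 1) := ⟨hp, hw⟩
    rw [ht, Set.mem_singleton_iff] at hm
    exact ⟨rfl, h2, hm⟩
  · have he := O.hempty p q (by omega) hq hpq h
    have hm : w ∈ O.B p ∩ O.B q := ⟨hp, hw⟩
    rw [he] at hm
    exact absurd hm (Set.notMem_empty w)

lemma intervalB {w : A} {p q r : ℕ} (hpr : p ≤ r) (hrq : r ≤ q) (hq : q ≤ O.u * O.K)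
    (hwp : w ∈ O.B p) (hwq : w ∈ O.B q) : w ∈ O.B r := by
  rcases (by omega : r = p ∨ r = q ∨ (p < r ∧ r < q)) with rfl | rfl | ⟨h1, h2⟩
  · exact hwp
  · exact hwq
  · obtain ⟨hqe, hmod, hwv⟩ := O.two_apart hq (by omega) hwp hwq
    have hr : r = p + 1 := by omega
    rw [hr, hwv]
    exact (O.hπ (p + 1) (by omega)).mapsTo O.a1B

end OvII
end Overalg

open Overalg OvII in
/-- In an overalgebra `𝐀` of the second type, suppose `η ∈ Con 𝐀` satisfies
`η ∩ (B×B) = θ ∈ Con 𝐁` and `(x, y) ∈ η \ θ*` with `x ∈ B i` and `y ∈ B j`.  Then `i`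
and `j` are distinct multiples of `K` belonging to the same block of the partition `𝒯`,
and `θ ≥ β`. -/
theorem lemmaII_offdiagonal {A : Type*} (O : OvII A)
    (η θ : Set (A × A)) (hη : IsCon O.FA η) (hθ : O.ConB θ)
    (hres : η ∩ (O.B 0 ×ˢ O.B 0) = θ)
    (θs : Set (A × A))
    (hθs : IsLeast {α : Set (A × A) | IsCon O.FA α ∧ θ ⊆ α} θs)
    (x y : A) (hxy : (x, y) ∈ η) (hns : (x, y) ∉ θs)
    (i j : ℕ) (hi : i ≤ O.u * O.K) (hj : j ≤ O.u * O.K)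
    (hxB : x ∈ O.B i) (hyB : y ∈ O.B j) :
    i ≠ j ∧ O.K ∣ i ∧ O.K ∣ j ∧
      (∃ n, 1 ≤ n ∧ n ≤ O.N ∧ i ∈ O.T n ∧ j ∈ O.T n) ∧ O.β ⊆ θ := by
  classical
  have hK2 : 2 ≤ O.K := O.hK
  have hK0 : 0 < O.K := by omega
  obtain ⟨⟨hrefl, hsymm, htrans⟩, hcomp⟩ := hθs.1.1
  have hθθs : θ ⊆ θs := hθs.1.2
  have hθη : θ ⊆ η := by rw [← hres]; exact Set.inter_subset_left
  have hθsub : θs ⊆ η := hθs.2 ⟨hη, hθη⟩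
  -- push an η-pair through `q_{0,k} ∘ q_{k,0}`, i.e. through `e_k`, into θs
  have push : ∀ w z : A, (w, z) ∈ η → ∀ k, k ≤ O.u * O.K →
      (O.e k w, O.e k z) ∈ θs := by
    intro w z hwz k hk
    obtain ⟨c, hc, hcw⟩ := O.eform hk w
    obtain ⟨c', hc', hcz⟩ := O.eform hk z
    have hq : O.qi0 k ∈ O.FA := Or.inl (Or.inr ⟨k, hk, rfl⟩)
    have h1 : (O.σ k (O.e k w), O.σ k (O.e k z)) ∈ η := hη.2 _ hq (w, z) hwz
    rw [hcw, hcz, O.hσ k hk c hc, O.hσ k hk c' hc'] at h1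
    have hθcc : (c, c') ∈ θ := by rw [← hres]; exact ⟨h1, hc, hc'⟩
    rcases Nat.eq_zero_or_pos k with rfl | hk1
    · rw [hcw, hcz, O.hπ0, O.hπ0]; exact hθθs hθcc
    · have hq2 : O.q0j k ∈ O.FA := Or.inr ⟨k, hk1, hk, rfl⟩
      have h2 : (O.π k (O.e 0 c), O.π k (O.e 0 c')) ∈ θs :=
        hcomp _ hq2 (c, c') (hθθs hθcc)
      rw [O.efix (Nat.zero_le _) hc, O.efix (Nat.zero_le _) hc'] at h2
      rw [hcw, hcz]; exact h2
  -- project a θs-pair of elements of `B k` down to a θ-pair in `B 0`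
  have proj : ∀ c c' : A, c ∈ O.B 0 → c' ∈ O.B 0 → ∀ k, k ≤ O.u * O.K →
      (O.π k c, O.π k c') ∈ θs → (c, c') ∈ θ := by
    intro c c' hc hc' k hk h
    have hq : O.qi0 k ∈ O.FA := Or.inl (Or.inr ⟨k, hk, rfl⟩)
    have h1 : (O.σ k (O.e k (O.π k c)), O.σ k (O.e k (O.π k c'))) ∈ θs :=
      hcomp _ hq _ h
    rw [O.efix hk ((O.hπ k hk).mapsTo hc), O.efix hk ((O.hπ k hk).mapsTo hc'),
      O.hσ k hk c hc, O.hσ k hk c' hc'] at h1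
    rw [← hres]; exact ⟨hθsub h1, hc, hc'⟩
  -- lift a θ-pair into `B k`
  have lift : ∀ c c' : A, (c, c') ∈ θ → ∀ k, k ≤ O.u * O.K →
      (O.π k c, O.π k c') ∈ θs := by
    intro c c' hcc k hk
    have hc : c ∈ O.B 0 := (hθ.1.1 hcc).1
    have hc' : c' ∈ O.B 0 := (hθ.1.1 hcc).2
    rcases Nat.eq_zero_or_pos k with rfl | hk1
    · rw [O.hπ0, O.hπ0]; exact hθθs hcc
    · have hq2 : O.q0j k ∈ O.FA := Or.inr ⟨k, hk1, hk, rfl⟩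
      have h2 : (O.π k (O.e 0 c), O.π k (O.e 0 c')) ∈ θs :=
        hcomp _ hq2 (c, c') (hθθs hcc)
      rwa [O.efix (Nat.zero_le _) hc, O.efix (Nat.zero_le _) hc'] at h2
  -- η-pairs sharing a copy `B k` are θs-related
  have shared : ∀ w z : A, (w, z) ∈ η → ∀ k, k ≤ O.u * O.K →
      w ∈ O.B k → z ∈ O.B k → (w, z) ∈ θs := by
    intro w z hwz k hk hw hz
    have h := push w z hwz k hk
    rwa [O.efix hk hw, O.efix hk hz] at h
  -- the core lemma, for the orientation `max J(w) < min J(z)`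
  have AUX : ∀ w z : A, (w, z) ∈ η → (w, z) ∉ θs → ∀ P Q : ℕ, P ≤ O.u * O.K →
      Q ≤ O.u * O.K → P < Q → w ∈ O.B P → z ∈ O.B Q →
      (∀ k, k ≤ O.u * O.K → w ∈ O.B k → k ≤ P) →
      (∀ k, k ≤ O.u * O.K → z ∈ O.B k → Q ≤ k) →
      O.K ∣ P ∧ O.K ∣ Q ∧ (∃ n, 1 ≤ n ∧ n ≤ O.N ∧ P ∈ O.T n ∧ Q ∈ O.T n) ∧ O.β ⊆ θ ∧
        (∀ k, k ≤ O.u * O.K → w ∈ O.B k → k = P) ∧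
        (∀ k, k ≤ O.u * O.K → z ∈ O.B k → k = Q) := by
    intro w z hwz hwzs P Q hPle hQle hPQ hwP hzQ hmax hmin
    obtain ⟨cw, hcw0, hcwP⟩ := (O.hπ P hPle).surjOn hwP
    obtain ⟨cz, hcz0, hczQ⟩ := (O.hπ Q hQle).surjOn hzQ
    -- Step A : the middle indices give the generators of β
    have stepA : ∀ k, P < k → k < Q → k % O.K ≠ 0 →
        (O.a (k % O.K), O.b (k % O.K)) ∈ θ := by
      intro k hPk hkQ hkm
      have hkle : k ≤ O.u * O.K := by omega
      have hmlt : k % O.K < O.K := Nat.mod_lt _ hK0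
      have hwk : w ∉ O.B k := fun hmem => absurd (hmax k hkle hmem) (by omega)
      have hzk : z ∉ O.B k := fun hmem => absurd (hmin k hkle hmem) (by omega)
      have e1 : O.e k w = O.π k (O.a (k % O.K)) := O.heM2 k hkle hkm P hPk w hwP hwk
      have e2 : O.e k z = O.π k (O.b (k % O.K)) := O.heM3 k hkle hkm Q hkQ hQle z hzQ hzk
      have hp := push w z hwz k hkle
      rw [e1, e2] at hp
      exact proj _ _ (O.hab _ (by omega) (by omega)).1 (O.hab _ (by omega) (by omega)).2
        k hkle hp
    -- value of `e ℓ w` at multiples of K to the right of P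
    have valX : ∀ ℓ, P < ℓ → ℓ ≤ Q → ℓ % O.K = 0 → ∀ n, 1 ≤ n → n ≤ O.N → ℓ ∈ O.T n →
        O.e ℓ w = O.π ℓ (O.a 1) ∨ (O.e ℓ w = O.π ℓ cw ∧ O.K ∣ P ∧ P ∈ O.T n) := by
      intro ℓ hPℓ hℓQ hℓm n hn1 hn2 hℓn
      by_cases hex : ∃ i' ∈ O.T n, w ∈ O.B i'
      · obtain ⟨i', hi'n, hwi'⟩ := hex
        obtain ⟨hi'le, hi'dvd⟩ := O.hT1 n hn1 hn2 hi'n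
        have hi'P : i' ≤ P := hmax i' hi'le hwi'
        rcases Nat.eq_or_lt_of_le hi'P with heq | hlt
        · right
          subst heq
          exact ⟨by rw [← hcwP]; exact O.heK1 n hn1 hn2 ℓ hℓn i' hi'n cw hcw0,
            hi'dvd, hi'n⟩
        · left
          rcases (by omega : P = i' + 1 ∨ i' + 2 ≤ P) with hPe | h2
          · subst hPe
            have hmod : i' % O.K = 0 := Nat.mod_eq_zero_of_dvd hi'dvd
            have hadj := O.hadj0 i' (by omega) hmod
            have hw1 : w ∈ O.B i' ∩ O.B (i' + 1) := ⟨hwi', hwP⟩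
            rw [hadj.1, Set.mem_singleton_iff] at hw1
            rw [hw1]
            exact O.heK1 n hn1 hn2 ℓ hℓn i' hi'n (O.a 1) O.a1B
          · obtain ⟨hPe, hmod, hwv⟩ := O.two_apart hPle h2 hwi' hwP
            exfalso
            have hd1 : O.K ∣ (i' + 1) := Nat.dvd_of_mod_eq_zero hmod
            have := dvd_succ_le_one' hi'dvd hd1
            omega
      · push_neg at hex
        exact Or.inl (O.heK2 n hn1 hn2 ℓ hℓn w hex)
    -- value of `e k z` at multiples of K to the left of Q
    have valZ : ∀ k, P ≤ k → k < Q → k % O.K = 0 → ∀ n, 1 ≤ n → n ≤ O.N → k ∈ O.T n →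
        O.e k z = O.π k (O.a 1) ∨ (O.e k z = O.π k cz ∧ O.K ∣ Q ∧ Q ∈ O.T n) := by
      intro k hPk hkQ hkm n hn1 hn2 hkn
      by_cases hex : ∃ j' ∈ O.T n, z ∈ O.B j'
      · obtain ⟨j', hj'n, hzj'⟩ := hex
        obtain ⟨hj'le, hj'dvd⟩ := O.hT1 n hn1 hn2 hj'n
        have hQj' : Q ≤ j' := hmin j' hj'le hzj'
        rcases Nat.eq_or_lt_of_le hQj' with heq | hlt
        · right
          subst heq
          exact ⟨by rw [← hczQ]; exact O.heK1 n hn1 hn2 k hkn Q hj'n cz hcz0,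
            hj'dvd, hj'n⟩
        · left
          rcases (by omega : j' = Q + 1 ∨ Q + 2 ≤ j') with hje | h2
          · subst hje
            have hQmod : Q % O.K = O.K - 1 := by
              have := pred_mod' hK0 hj'dvd (by omega)
              simpa using this
            have hadj := O.hadjl Q (by omega) hQmod
            have hz1 : z ∈ O.B Q ∩ O.B (Q + 1) := ⟨hzQ, hzj'⟩
            rw [hadj.1, Set.mem_singleton_iff] at hz1
            rw [hz1, hadj.2]
            exact O.heK1 n hn1 hn2 k hkn (Q + 1) hj'n (O.a 1) O.a1B
          · obtain ⟨hje, hmod, hzv⟩ := O.two_apart hj'le h2 hzQ hzj'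
            exfalso
            subst hje
            have hd1 : O.K ∣ (Q + 1) := Nat.dvd_of_mod_eq_zero hmod
            have := dvd_succ_le_one' hd1 hj'dvd
            omega
      · push_neg at hex
        exact Or.inl (O.heK2 n hn1 hn2 k hkn z hex)
    -- the main dichotomy
    have hbad : O.K ∣ P ∧ O.K ∣ Q ∧ ∃ n, 1 ≤ n ∧ n ≤ O.N ∧ P ∈ O.T n ∧ Q ∈ O.T n := by
      by_contra hnbad
      apply hwzs
      have link : ∀ k, P ≤ k → k < Q → (O.e k z, O.e (k + 1) w) ∈ θs := by
        intro k hPk hkQ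
        have hkle : k ≤ O.u * O.K := by omega
        have hk1le : k + 1 ≤ O.u * O.K := by omega
        have hwk1 : w ∉ O.B (k + 1) := fun hmem => absurd (hmax _ hk1le hmem) (by omega)
        have hzk : z ∉ O.B k := fun hmem => absurd (hmin _ hkle hmem) (by omega)
        by_cases hkm : k % O.K = 0
        · -- Case 3 : K ∣ k
          have hkd : O.K ∣ k := Nat.dvd_of_mod_eq_zero hkm
          have hk1m : (k + 1) % O.K = 1 := by
            have := add_mod_dvd' hkd (show 1 < O.K by omega)
            simpa using this
          have e1 : O.e (k + 1) w = O.π (k + 1) (O.a 1) := by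
            have h := O.heM2 (k + 1) hk1le (by rw [hk1m]; exact one_ne_zero) P
              (by omega) w hwP hwk1
            rw [hk1m] at h; exact h
          have hadj := O.hadj0 k (by omega) hkm
          obtain ⟨n, ⟨hn1, hn2, hkn⟩, -⟩ := O.hT2 k hkle hkd
          rcases valZ k hPk hkQ hkm n hn1 hn2 hkn with h | ⟨h, hQd, hQn⟩
          · rw [h, e1, ← hadj.2]; exact hrefl _
          · rcases Nat.eq_or_lt_of_le hPk with heq | hPk'
            · exfalso
              exact hnbad ⟨heq ▸ hkd, hQd, n, hn1, hn2, heq ▸ hkn, hQn⟩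
            · rcases valX k hPk' (by omega) hkm n hn1 hn2 hkn with hx | ⟨hx, hPd, hPn⟩
              · have hp := push w z hwz k hkle
                rw [hx, h] at hp
                have hth := proj _ _ O.a1B hcz0 k hkle hp
                have hth2 := hθ.1.2.2.1 _ _ hth
                have hl := lift _ _ hth2 k hkle
                rw [h, e1, ← hadj.2]; exact hl
              · exfalso; exact hnbad ⟨hPd, hQd, n, hn1, hn2, hPn, hQn⟩
        · -- K ∤ k
          have hmlt : k % O.K < O.K := Nat.mod_lt _ hK0
          have e2 : O.e k z = O.π k (O.b (k % O.K)) :=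
            O.heM3 k hkle hkm Q hkQ hQle z hzQ hzk
          by_cases hk1m : (k + 1) % O.K = 0
          · -- Case 2 : K ∣ k+1
            have hkK1 : k % O.K = O.K - 1 := by
              by_contra hne
              have hlt : k % O.K + 1 < O.K := by omega
              have := mod_succ_eq' hlt
              omega
            have hadj := O.hadjl k (by omega) hkK1
            obtain ⟨n, ⟨hn1, hn2, hk1n⟩, -⟩ :=
              O.hT2 (k + 1) hk1le (Nat.dvd_of_mod_eq_zero hk1m)
            rcases valX (k + 1) (by omega) (by omega) hk1m n hn1 hn2 hk1n with
              hx | ⟨hx, hPd, hPn⟩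
            · rw [e2, hx, hkK1, hadj.2]; exact hrefl _
            · rcases Nat.eq_or_lt_of_le (show k + 1 ≤ Q by omega) with heq | hlt
              · exfalso
                exact hnbad ⟨hPd, heq ▸ Nat.dvd_of_mod_eq_zero hk1m, n, hn1, hn2,
                  hPn, heq ▸ hk1n⟩
              · rcases valZ (k + 1) (by omega) hlt hk1m n hn1 hn2 hk1n with
                  hz1 | ⟨hz1, hQd, hQn⟩
                · have hp := push w z hwz (k + 1) hk1le
                  rw [hx, hz1] at hp
                  have hth := proj _ _ hcw0 O.a1B (k + 1) hk1le hp
                  have hth2 := hθ.1.2.2.1 _ _ hth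
                  have hl := lift _ _ hth2 (k + 1) hk1le
                  rw [e2, hx, hkK1, hadj.2]; exact hl
                · exfalso; exact hnbad ⟨hPd, hQd, n, hn1, hn2, hPn, hQn⟩
          · -- Case 1 : K ∤ k, K ∤ k+1
            have hklt : k % O.K + 1 < O.K := by
              by_contra hge
              have h1 : k % O.K = O.K - 1 := by omega
              exact hk1m (mod_succ_zero' hK0 h1)
            have hk1v : (k + 1) % O.K = k % O.K + 1 := mod_succ_eq' hklt
            have e1 : O.e (k + 1) w = O.π (k + 1) (O.a (k % O.K + 1)) := by
              have h := O.heM2 (k + 1) hk1le (by rw [hk1v]; omega) P (by omega) w hwP hwk1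
              rw [hk1v] at h; exact h
            have hadj := O.hadjm k (by omega) (by omega) (by omega)
            rw [e2, e1, hadj.2]; exact hrefl _
      have chain : ∀ k, P ≤ k → k ≤ Q → (w, O.e k w) ∈ θs := by
        intro k hk
        induction k, hk using Nat.le_induction with
        | base => intro _; rw [O.efix hPle hwP]; exact hrefl w
        | succ k hPk ih =>
          intro hkQ
          have h1 := ih (by omega)
          have h2 := push w z hwz k (by omega)
          have h3 := link k hPk (by omega)
          exact htrans _ _ _ (htrans _ _ _ h1 h2) h3
      have hfin := chain Q (by omega) le_rfl
      have h2 := push w z hwz Q hQle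
      rw [O.efix hQle hzQ] at h2
      exact htrans _ _ _ hfin h2
    obtain ⟨hPd, hQd, n, hn1, hn2, hPn, hQn⟩ := hbad
    -- `w` is not the left tie-point of `B P`
    have hcwa1 : cw ≠ O.a 1 := by
      intro h
      have hPmod : P % O.K = 0 := Nat.mod_eq_zero_of_dvd hPd
      have hadj := O.hadj0 P (by omega) hPmod
      have hmem : O.π P (O.a 1) ∈ O.B P ∩ O.B (P + 1) := by
        rw [hadj.1]; exact Set.mem_singleton _
      have hw1 : w ∈ O.B (P + 1) := by rw [← hcwP, h]; exact hmem.2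
      have := hmax (P + 1) (by omega) hw1
      omega
    -- `z` is not the left tie-point of `B Q`
    have hcza1 : cz ≠ O.a 1 := by
      intro h
      have hQmod : (Q - 1) % O.K = O.K - 1 := pred_mod' hK0 hQd (by omega)
      have hadj := O.hadjl (Q - 1) (by omega) hQmod
      have hmem : O.π (Q - 1) (O.b (O.K - 1)) ∈ O.B (Q - 1) ∩ O.B (Q - 1 + 1) := by
        rw [hadj.1]; exact Set.mem_singleton _
      have hz1 : z ∈ O.B (Q - 1) := by
        have hzeq : z = O.π (Q - 1) (O.b (O.K - 1)) := by
          rw [← hczQ, h, hadj.2]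
          congr 1
          omega
        rw [hzeq]; exact hmem.1
      have := hmin (Q - 1) (by omega) hz1
      omega
    -- β ≤ θ
    have hβθ : O.β ⊆ θ := by
      apply O.hβ.2
      constructor
      · exact ⟨hθ.1, hθ.2⟩
      · intro m hm1 hm2
        have hPK : P + O.K ≤ Q := add_le_of_dvd_lt' hPd hQd hPQ
        have hmod : (P + m) % O.K = m := add_mod_dvd' hPd (by omega)
        have h := stepA (P + m) (by omega) (by omega) (by rw [hmod]; omega)
        rwa [hmod] at h
    -- P is the unique index of w
    have huw : ∀ k, k ≤ O.u * O.K → w ∈ O.B k → k = P := by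
      intro k hkle hwk
      have hkP := hmax k hkle hwk
      rcases Nat.eq_or_lt_of_le hkP with h | hlt
      · exact h
      · exfalso
        rcases (by omega : P = k + 1 ∨ k + 2 ≤ P) with hPe | h2
        · subst hPe
          have hkmod : k % O.K = O.K - 1 := by
            have := pred_mod' hK0 hPd (by omega)
            simpa using this
          have hadj := O.hadjl k (by omega) hkmod
          have hw1 : w ∈ O.B k ∩ O.B (k + 1) := ⟨hwk, hwP⟩
          rw [hadj.1, Set.mem_singleton_iff] at hw1
          apply hcwa1
          have heq : O.π (k + 1) cw = O.π (k + 1) (O.a 1) := by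
            rw [hcwP, hw1, hadj.2]
          exact (O.hπ (k + 1) hPle).injOn hcw0 O.a1B heq
        · obtain ⟨hPe, hmod, hwv⟩ := O.two_apart hPle h2 hwk hwP
          have hd1 : O.K ∣ k + 1 := Nat.dvd_of_mod_eq_zero hmod
          have hd2 : O.K ∣ k + 2 := hPe ▸ hPd
          have := dvd_succ_le_one' hd1 hd2
          omega
    -- Q is the unique index of z
    have huz : ∀ k, k ≤ O.u * O.K → z ∈ O.B k → k = Q := by
      intro k hkle hzk
      have hQk := hmin k hkle hzk
      rcases Nat.eq_or_lt_of_le hQk with h | hlt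
      · exact h.symm
      · exfalso
        rcases (by omega : k = Q + 1 ∨ Q + 2 ≤ k) with hke | h2
        · subst hke
          have hQmod : Q % O.K = 0 := Nat.mod_eq_zero_of_dvd hQd
          have hadj := O.hadj0 Q (by omega) hQmod
          have hz1 : z ∈ O.B Q ∩ O.B (Q + 1) := ⟨hzQ, hzk⟩
          rw [hadj.1, Set.mem_singleton_iff] at hz1
          apply hcza1
          have heq : O.π Q cz = O.π Q (O.a 1) := by rw [hczQ, hz1]
          exact (O.hπ Q hQle).injOn hcz0 O.a1B heq
        · obtain ⟨hke, hmod, hzv⟩ := O.two_apart hkle h2 hzQ hzk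
          have hd1 : O.K ∣ Q + 1 := Nat.dvd_of_mod_eq_zero hmod
          have := dvd_succ_le_one' hQd hd1
          omega
    exact ⟨hPd, hQd, ⟨n, hn1, hn2, hPn, hQn⟩, hβθ, huw, huz⟩
  -- extremal indices
  have exmax : ∀ (w : A) (i0 : ℕ), i0 ≤ O.u * O.K → w ∈ O.B i0 →
      ∃ P, P ≤ O.u * O.K ∧ w ∈ O.B P ∧ ∀ k, k ≤ O.u * O.K → w ∈ O.B k → k ≤ P := by
    intro w i0 hi0 hw
    refine ⟨Nat.findGreatest (fun k => w ∈ O.B k) (O.u * O.K), Nat.findGreatest_le _, ?_, ?_⟩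
    · exact Nat.findGreatest_spec (P := fun k => w ∈ O.B k) hi0 hw
    · exact fun k hk hwk => Nat.le_findGreatest hk hwk
  have exmin : ∀ (w : A) (i0 : ℕ), i0 ≤ O.u * O.K → w ∈ O.B i0 →
      ∃ P, P ≤ O.u * O.K ∧ w ∈ O.B P ∧ ∀ k, k ≤ O.u * O.K → w ∈ O.B k → P ≤ k := by
    intro w i0 hi0 hw
    have hex : ∃ k, w ∈ O.B k ∧ k ≤ O.u * O.K := ⟨i0, hw, hi0⟩
    exact ⟨Nat.find hex, (Nat.find_spec hex).2, (Nat.find_spec hex).1,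
      fun k hk hwk => Nat.find_min' hex ⟨hwk, hk⟩⟩
  obtain ⟨P, hPle, hPx, hPmax⟩ := exmax x i hi hxB
  obtain ⟨Q, hQle, hQy, hQmin⟩ := exmin y j hj hyB
  rcases Nat.lt_or_ge P Q with hor | hor
  · obtain ⟨hPd, hQd, ⟨n, hn1, hn2, hPn, hQn⟩, hβθ, hux, huy⟩ :=
      AUX x y hxy hns P Q hPle hQle hor hPx hQy hPmax hQmin
    have hiP : i = P := hux i hi hxB
    have hjQ : j = Q := huy j hj hyB
    exact ⟨by omega, by rw [hiP]; exact hPd, by rw [hjQ]; exact hQd,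
      ⟨n, hn1, hn2, by rw [hiP]; exact hPn, by rw [hjQ]; exact hQn⟩, hβθ⟩
  · obtain ⟨Q₂, hQ₂le, hQ₂y, hQ₂max⟩ := exmax y j hj hyB
    obtain ⟨P₂, hP₂le, hP₂x, hP₂min⟩ := exmin x i hi hxB
    rcases Nat.lt_or_ge Q₂ P₂ with hor2 | hor2
    · obtain ⟨hQd, hPd, ⟨n, hn1, hn2, hQn, hPn⟩, hβθ, huy, hux⟩ :=
        AUX y x (hη.1.2.1 _ _ hxy) (fun hmem => hns (hsymm _ _ hmem)) Q₂ P₂ hQ₂le hP₂le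
          hor2 hQ₂y hP₂x hQ₂max hP₂min
      have hiP : i = P₂ := hux i hi hxB
      have hjQ : j = Q₂ := huy j hj hyB
      exact ⟨by omega, by rw [hiP]; exact hPd, by rw [hjQ]; exact hQd,
        ⟨n, hn1, hn2, by rw [hiP]; exact hPn, by rw [hjQ]; exact hQn⟩, hβθ⟩
    · exfalso
      have hP₂P : P₂ ≤ P := hPmax P₂ hP₂le hP₂x
      have hQQ₂ : Q ≤ Q₂ := hQ₂max Q hQle hQy
      have hxr : x ∈ O.B (max P₂ Q) :=
        O.intervalB (le_max_left _ _) (max_le hP₂P hor) hPle hP₂x hPx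
      have hyr : y ∈ O.B (max P₂ Q) :=
        O.intervalB (le_max_right _ _) (max_le hor2 hQQ₂) hQ₂le hQy hQ₂y
      exact hns (shared x y hxy (max P₂ Q) (by omega) hxr hyr)
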